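/- Let P, X, Y be real Banach spaces, K ⊆ Y a pointed closed convex cone, f : P × X → Y a K-convex and K-closed map, and C : P ⇉ X a closed convex set-valued map. Let (p̄, x̄) ∈ gph S with ȳ = f(p̄, x̄), let H : P ⇉ P × X be H(p) = {p} × C(p), and assume (i) ℝ⁺(rge H − dom f) is a closed linear subspace of P × X, (ii) ℝ⁺(P − dom C) is a closed linear subspace of P, and (iii) F is K-dominated by 𝓕 near p̄, i.e., F(p) ⊆ 𝓕(p) + K for all p in some neighborhood of p̄. Then for every y* ∈ Y*, the Fréchet coderivative of the profile of the perturbation map satisfies D̂*(𝓕 + K)(p̄, ȳ)(y*) = ⋃_{(p*, x*) ∈ D*(f + K)(p̄, x̄)(y*)} {p* + q* : q* ∈ D*C(p̄, x̄)(x*)}. -/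

import Mathlib

open Set Pointwise Topology Filter

/-- The graph of a set-valued map. -/
def gph {α β : Type*} (H : α → Set β) : Set (α × β) := {q | q.2 ∈ H q.1}

/-- The domain of a set-valued map. -/
def dom {α β : Type*} (H : α → Set β) : Set α := {a | (H a).Nonempty}

/-- The coderivative (in the sense of convex analysis) of a set-valued map `H` at
`(a, b) ∈ gph H`:  `φ ∈ coderiv H a b ψ` iff `(φ, -ψ) ∈ N((a,b), gph H)`, that is,
`⟨φ, u - a⟩ - ⟨ψ, v - b⟩ ≤ 0` for all `(u, v) ∈ gph H`. -/
def coderiv {α β : Type*} [NormedAddCommGroup α] [NormedSpace ℝ α]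
    [NormedAddCommGroup β] [NormedSpace ℝ β]
    (H : α → Set β) (a : α) (b : β) (ψ : β →L[ℝ] ℝ) : Set (α →L[ℝ] ℝ) :=
  {φ | ∀ u : α, ∀ v ∈ H u, φ (u - a) - ψ (v - b) ≤ 0}

/-- The Fréchet coderivative of a set-valued map `H` at `(a, b) ∈ gph H`, with the sum
norm `‖(u,v)‖ = ‖u‖ + ‖v‖` on the product:  `φ ∈ fCoderiv H a b ψ` iff
`(φ, -ψ) ∈ N̂((a,b), gph H)`, the Fréchet normal cone, expressed by its standard
`ε`–`δ` characterization. -/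
def fCoderiv {α β : Type*} [NormedAddCommGroup α] [NormedSpace ℝ α]
    [NormedAddCommGroup β] [NormedSpace ℝ β]
    (H : α → Set β) (a : α) (b : β) (ψ : β →L[ℝ] ℝ) : Set (α →L[ℝ] ℝ) :=
  {φ | ∀ ε > (0:ℝ), ∃ δ > (0:ℝ), ∀ u : α, ∀ v ∈ H u, ‖u - a‖ + ‖v - b‖ < δ →
      φ (u - a) - ψ (v - b) ≤ ε * (‖u - a‖ + ‖v - b‖)}

/-- The subdifferential (in the sense of convex analysis) of `g : α → ℝ` at `a`. -/
def subdiff {α : Type*} [NormedAddCommGroup α] [NormedSpace ℝ α]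
    (g : α → ℝ) (a : α) : Set (α →L[ℝ] ℝ) :=
  {φ | ∀ u : α, φ (u - a) ≤ g u - g a}

/-!
Near `pb` the profiles `𝓕 + K` and `F + K` coincide (domination), and `gph (F + K)` is convex,
so Fréchet normals to the former are convex-analysis normals to the latter: a Fréchet normal
inequality at `z` propagates along segments of a convex set by positive homogeneity.

`gph (F + K)` is the projection of `epi f ∩ (gph C × Y)`, so its normals come from the sum rule
`N(A ∩ B) ⊆ N(A) + N(B)` for closed convex sets `A`, `B` of a Banach space with `A - B` the whole
space, which holds here because `f` is everywhere defined. The decomposition is produced by the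
M. Riesz extension theorem. Its continuity rests on a Robinson–Ursescu estimate: by Baire some
`(A ∩ nB̄) - (B ∩ nB̄)` has a ball in its closure, and a geometric-series iteration in the
complete space removes the closure. A normal to `gph C × Y` vanishes on `Y`, which splits off
the coderivative of `C`.
-/
section OpenMapping

open Metric

variable {E : Type*} [NormedAddCommGroup E] [NormedSpace ℝ E]

theorem Convex.sum_smul_mem_of_zero_mem {V ι : Type*} [AddCommGroup V] [Module ℝ V]
    {s : Set V} (hs : Convex ℝ s) (h0 : (0 : V) ∈ s) {t : Finset ι} {w : ι → ℝ} {g : ι → V}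
    (hw₀ : ∀ i ∈ t, 0 ≤ w i) (hw₁ : ∑ i ∈ t, w i ≤ 1) (hg : ∀ i ∈ t, g i ∈ s) :
    ∑ i ∈ t, w i • g i ∈ s := by
  rcases (Finset.sum_nonneg hw₀).eq_or_lt with hsum | hsum
  · rwa [Finset.sum_eq_zero fun i hi => by
      rw [(Finset.sum_eq_zero_iff_of_nonneg hw₀).1 hsum.symm i hi, zero_smul]]
  · have := hs.smul_mem_of_zero_mem h0 (hs.centerMass_mem hw₀ hsum hg) ⟨hsum.le, hw₁⟩
    rwa [Finset.centerMass, smul_inv_smul₀ hsum.ne'] at this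

theorem exists_tendsto_geometric_sum_of_ball_subset_closure {D : Set E} {r : ℝ}
    (hD : ball (0 : E) r ⊆ closure D) {y : E} (hy : y ∈ ball (0 : E) r) :
    ∃ d : ℕ → E, (∀ k, d k ∈ D) ∧
      Tendsto (fun n => ∑ k ∈ Finset.range n, (1 / 2 : ℝ) ^ k • d k) atTop (𝓝 y) := by
  have hr : 0 < r := pos_of_mem_ball hy
  have step : ∀ v ∈ ball (0 : E) r, ∃ d ∈ D, (2 : ℝ) • (v - d) ∈ ball (0 : E) r := by
    intro v hv
    obtain ⟨d, hdD, hd⟩ := Metric.mem_closure_iff.1 (hD hv) (r / 2) (by positivity)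
    refine ⟨d, hdD, ?_⟩
    rw [mem_ball_zero_iff, norm_smul, ← dist_eq_norm, Real.norm_two]
    linarith
  -- `v ↦ 2 • (v - c v)` maps the ball into itself; iterating it expands `y` in base `1 / 2`.
  choose! c hcD hc using step
  set u : ℕ → E := fun k => (fun v => (2 : ℝ) • (v - c v))^[k] y
  have hu_succ : ∀ k, u (k + 1) = (2 : ℝ) • (u k - c (u k)) :=
    fun k => Function.iterate_succ_apply' _ _ _
  have hu : ∀ k, u k ∈ ball (0 : E) r := by
    intro k
    induction k with
    | zero => exact hy
    | succ k ih => rw [hu_succ]; exact hc _ ih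
  have hsum : ∀ n,
      ∑ k ∈ Finset.range n, (1 / 2 : ℝ) ^ k • c (u k) = y - (1 / 2 : ℝ) ^ n • u n := by
    intro n
    induction n with
    | zero => simp [u]
    | succ n ih => rw [Finset.sum_range_succ, ih, hu_succ]; module
  have hrem : Tendsto (fun n => (1 / 2 : ℝ) ^ n • u n) atTop (𝓝 0) := by
    refine squeeze_zero_norm (a := fun n => (1 / 2 : ℝ) ^ n * r) (fun n => ?_) (by
      simpa using (tendsto_pow_atTop_nhds_zero_of_lt_one (by norm_num : (0 : ℝ) ≤ 1 / 2)
        (by norm_num)).mul_const r)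
    rw [norm_smul, norm_pow, Real.norm_of_nonneg (by norm_num : (0 : ℝ) ≤ 1 / 2)]
    exact mul_le_mul_of_nonneg_left (mem_ball_zero_iff.1 (hu n)).le (by positivity)
  refine ⟨fun k => c (u k), fun k => hcD _ (hu k), ?_⟩
  rw [funext hsum]
  simpa using tendsto_const_nhds.sub hrem

theorem ball_subset_image_of_ball_subset_closure_image {F : Type*} [NormedAddCommGroup F]
    [NormedSpace ℝ F] [CompleteSpace E] (T : E →L[ℝ] F) {G : Set E} (hG : Convex ℝ G)
    (hGc : IsClosed G) (hGb : Bornology.IsBounded G) (hG0 : (0 : E) ∈ G) {r : ℝ}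
    (h : ball (0 : F) r ⊆ closure (T '' G)) : ball (0 : F) (r / 2) ⊆ T '' G := by
  intro y hy
  have h2y : (2 : ℝ) • y ∈ ball (0 : F) r := by
    rw [mem_ball_zero_iff, norm_smul, Real.norm_two]
    linarith [mem_ball_zero_iff.1 hy]
  obtain ⟨d, hd, hlim⟩ := exists_tendsto_geometric_sum_of_ball_subset_closure h h2y
  choose g hgG hgd using hd
  obtain ⟨R, hR⟩ := hGb.exists_norm_le
  have hR0 : 0 ≤ R := (norm_nonneg _).trans (hR _ (hgG 0))
  have hx : Summable fun k => (1 / 2 : ℝ) ^ (k + 1) • g k := by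
    refine Summable.of_norm_bounded (summable_geometric_two.mul_right R) fun k => ?_
    rw [norm_smul, norm_pow, Real.norm_of_nonneg (by norm_num : (0 : ℝ) ≤ 1 / 2)]
    exact mul_le_mul (pow_le_pow_of_le_one (by norm_num) (by norm_num) k.le_succ) (hR _ (hgG k))
      (norm_nonneg _) (by positivity)
  refine ⟨∑' k, (1 / 2 : ℝ) ^ (k + 1) • g k, ?_, ?_⟩
  · refine hGc.mem_of_tendsto hx.hasSum.tendsto_sum_nat (Eventually.of_forall fun n => ?_)
    refine hG.sum_smul_mem_of_zero_mem hG0 (fun _ _ => by positivity) ?_ (fun k _ => hgG k)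
    have := sum_geometric_two_le n
    simp only [pow_succ, ← Finset.sum_mul]
    linarith
  · refine tendsto_nhds_unique (hx.hasSum.mapL T).tendsto_sum_nat ?_
    have := hlim.const_smul (1 / 2 : ℝ)
    simp only [smul_smul, ← hgd, Finset.smul_sum, ← pow_succ'] at this
    simpa using this

theorem exists_ball_subset_closure_sub_inter_closedBall [CompleteSpace E] {A B : Set E}
    (hA : Convex ℝ A) (hB : Convex ℝ B) (hAB : A - B = univ) :
    ∃ r > 0, ∃ n : ℕ,
      ball (0 : E) r ⊆ closure ((A ∩ closedBall 0 n) - (B ∩ closedBall 0 n)) := by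
  set D : ℕ → Set E := fun n => (A ∩ closedBall 0 n) - (B ∩ closedBall 0 n)
  have hD_mono : Monotone D := fun m n hmn => by
    have : closedBall (0 : E) m ⊆ closedBall 0 n :=
      closedBall_subset_closedBall (by exact_mod_cast hmn)
    exact Set.sub_subset_sub (inter_subset_inter_right _ this) (inter_subset_inter_right _ this)
  have hD_cover : ∀ w, ∃ n, w ∈ D n := by
    intro w
    obtain ⟨a, ha, b, hb, rfl⟩ : w ∈ A - B := hAB ▸ mem_univ w
    obtain ⟨n, hn⟩ := exists_nat_ge (max ‖a‖ ‖b‖)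
    exact ⟨n, a, ⟨ha, mem_closedBall_zero_iff.2 ((le_max_left _ _).trans hn)⟩,
      b, ⟨hb, mem_closedBall_zero_iff.2 ((le_max_right _ _).trans hn)⟩, rfl⟩
  obtain ⟨n, w₀, hw₀⟩ := nonempty_interior_of_iUnion_of_closed (fun n => isClosed_closure)
    (eq_univ_of_forall fun w =>
      mem_iUnion.2 ((hD_cover w).imp fun n hn => subset_closure (s := D n) hn))
  obtain ⟨ρ, hρ, hball⟩ := Metric.isOpen_iff.1 isOpen_interior w₀ hw₀
  obtain ⟨m, hm⟩ := hD_cover (-w₀)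
  refine ⟨ρ / 2, by positivity, max n m, fun u hu => ?_⟩
  have hconv : Convex ℝ (closure (D (max n m))) :=
    ((hA.inter (convex_closedBall _ _)).sub (hB.inter (convex_closedBall _ _))).closure
  have h₁ : w₀ + (2 : ℝ) • u ∈ closure (D (max n m)) := by
    refine closure_mono (hD_mono (le_max_left n m)) (interior_subset (hball ?_))
    rw [mem_ball, dist_eq_norm, add_sub_cancel_left, norm_smul, Real.norm_two]
    linarith [mem_ball_zero_iff.1 hu]
  have h₂ : -w₀ ∈ closure (D (max n m)) := subset_closure (hD_mono (le_max_right n m) hm)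
  convert hconv h₁ h₂ (by norm_num : (0 : ℝ) ≤ 1 / 2) (by norm_num : (0 : ℝ) ≤ 1 / 2)
    (by norm_num) using 1
  module

theorem exists_ball_subset_sub_inter_closedBall [CompleteSpace E] {A B : Set E}
    (hA : Convex ℝ A) (hAc : IsClosed A) (hB : Convex ℝ B) (hBc : IsClosed B)
    (hA0 : (0 : E) ∈ A) (hB0 : (0 : E) ∈ B) (hAB : A - B = univ) :
    ∃ r > 0, ∃ n : ℕ, ball (0 : E) r ⊆ (A ∩ closedBall 0 n) - (B ∩ closedBall 0 n) := by
  obtain ⟨r, hr, n, h⟩ := exists_ball_subset_closure_sub_inter_closedBall hA hB hAB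
  have himage : (ContinuousLinearMap.fst ℝ E E - ContinuousLinearMap.snd ℝ E E) ''
      ((A ∩ closedBall 0 n) ×ˢ (B ∩ closedBall 0 n)) =
        (A ∩ closedBall 0 n) - (B ∩ closedBall 0 n) :=
    image_prod _
  rw [← himage] at h
  have h0 : (0 : E) ∈ closedBall (0 : E) n := mem_closedBall_self (Nat.cast_nonneg n)
  refine ⟨r / 2, by positivity, n, ?_⟩
  rw [← himage]
  exact ball_subset_image_of_ball_subset_closure_image _
    ((hA.inter (convex_closedBall _ _)).prod (hB.inter (convex_closedBall _ _)))
    ((hAc.inter isClosed_closedBall).prod (hBc.inter isClosed_closedBall))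
    ((isBounded_closedBall.subset inter_subset_right).prod
      (isBounded_closedBall.subset inter_subset_right))
    ⟨⟨hA0, h0⟩, ⟨hB0, h0⟩⟩ h

end OpenMapping

theorem exists_linearMap_le_of_sub_eq_univ {E : Type*} [AddCommGroup E] [Module ℝ E]
    {A B : Set E} (hA : Convex ℝ A) (hB : Convex ℝ B) (hA0 : (0 : E) ∈ A) (hB0 : (0 : E) ∈ B)
    (hAB : A - B = univ) (Φ : E →ₗ[ℝ] ℝ) (hΦ : ∀ x ∈ A ∩ B, Φ x ≤ 0) :
    ∃ ℓ : E →ₗ[ℝ] ℝ, ∀ a ∈ A, ∀ b ∈ B, Φ a ≤ ℓ (a - b) := by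
  -- Extend `(0, t) ↦ t` from `{0} × ℝ` to `g ≥ 0` on the cone spanned by the `(a - b, -Φ a)`;
  -- then `ℓ = g (·, 0)`.
  let L : E × E →ₗ[ℝ] E × ℝ :=
    (LinearMap.fst ℝ E E - LinearMap.snd ℝ E E).prod (-(Φ ∘ₗ LinearMap.fst ℝ E E))
  have hLapply : ∀ a b, L (a, b) = (a - b, -Φ a) := fun _ _ => rfl
  have hS : Convex ℝ (L '' A ×ˢ B) := (hA.prod hB).linear_image L
  set C := ConvexCone.hull ℝ (L '' A ×ˢ B)
  have hL : ∀ a ∈ A, ∀ b ∈ B, L (a, b) ∈ C :=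
    fun a ha b hb => ConvexCone.subset_hull ⟨(a, b), ⟨ha, hb⟩, rfl⟩
  have hC0 : C.Pointed := by
    simpa only [ConvexCone.Pointed, Prod.mk_zero_zero, map_zero] using hL 0 hA0 0 hB0
  let f : E × ℝ →ₗ.[ℝ] ℝ :=
    ⟨(⊥ : Submodule ℝ E).prod ⊤, LinearMap.snd ℝ E ℝ ∘ₗ Submodule.subtype _⟩
  have hf : ∀ x : f.domain, f x = (x : E × ℝ).2 := fun _ => rfl
  have hnonneg : ∀ x : f.domain, (x : E × ℝ) ∈ C.toPointedCone hC0 → 0 ≤ f x := by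
    rintro ⟨⟨w, t⟩, hwt⟩ hs
    obtain ⟨c, hc, _, ⟨⟨a, b⟩, ⟨ha, hb⟩, rfl⟩, hcx⟩ :=
      (ConvexCone.mem_hull_of_convex hS).1 hs
    have hw : w = 0 := (Submodule.mem_prod.1 hwt).1
    simp only [hLapply, Prod.smul_mk, Prod.mk.injEq, hw, smul_eq_zero, sub_eq_zero, hc.ne',
      false_or] at hcx
    obtain ⟨rfl, rfl⟩ := hcx
    rw [hf]
    exact smul_nonneg hc.le (neg_nonneg.2 (hΦ a ⟨ha, hb⟩))
  have hdense : ∀ y, ∃ x : f.domain, (x : E × ℝ) + y ∈ C.toPointedCone hC0 := by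
    rintro ⟨w, t⟩
    obtain ⟨a, ha, b, hb, rfl⟩ : w ∈ A - B := hAB ▸ mem_univ w
    refine ⟨⟨(0, -Φ a - t), Submodule.mem_prod.2 ⟨zero_mem _, trivial⟩⟩, ?_⟩
    convert hL a ha b hb using 1
    simp [hLapply]
  obtain ⟨g, hgf, hgs⟩ := riesz_extension (C.toPointedCone hC0) f hnonneg hdense
  refine ⟨g ∘ₗ LinearMap.inl ℝ E ℝ, fun a ha b hb => ?_⟩
  have hsplit : L (a, b) = LinearMap.inl ℝ E ℝ (a - b) + ((0 : E), -Φ a) := by simp [hLapply]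
  have h0 := hgf ⟨((0 : E), -Φ a), Submodule.mem_prod.2 ⟨zero_mem _, trivial⟩⟩
  have := hgs _ (hL a ha b hb)
  rw [hsplit, map_add, h0, hf] at this
  simpa using this

section NormalCone

variable {E : Type*} [NormedAddCommGroup E] [NormedSpace ℝ E]

def normalCone (s : Set E) (z : E) : Set (E →L[ℝ] ℝ) := {φ | ∀ x ∈ s, φ (x - z) ≤ 0}

theorem normalCone_eq_preimage_add (s : Set E) (z : E) :
    normalCone s z = normalCone ((z + ·) ⁻¹' s) 0 := by
  ext φ
  exact ⟨fun h x hx => by simpa using h _ hx,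
    fun h x hx => by simpa using h (x - z) (by simpa using hx)⟩

theorem LinearMap.continuous_of_forall_ball_le (ℓ : E →ₗ[ℝ] ℝ) {r M : ℝ} (hr : 0 < r)
    (h : ∀ w ∈ Metric.ball (0 : E) r, M ≤ ℓ w) : Continuous ℓ := by
  have hb : (𝓝 (0 : E)).IsBoundedUnder (· ≥ ·) ℓ :=
    isBoundedUnder_of_eventually_ge (Filter.mem_of_superset (Metric.ball_mem_nhds 0 hr) h)
  have := ((ℓ.concaveOn convex_univ).continuousOn_tfae isOpen_univ univ_nonempty).out 3 1
  exact continuousOn_univ.1 (this.1 ⟨0, mem_univ _, hb⟩)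

theorem normalCone_inter_zero_subset_add [CompleteSpace E] {A B : Set E} (hA : Convex ℝ A)
    (hAc : IsClosed A) (hB : Convex ℝ B) (hBc : IsClosed B) (hA0 : (0 : E) ∈ A)
    (hB0 : (0 : E) ∈ B) (hAB : A - B = univ) :
    normalCone (A ∩ B) 0 ⊆ normalCone A 0 + normalCone B 0 := by
  intro Φ hΦ
  replace hΦ : ∀ x ∈ A ∩ B, Φ x ≤ 0 := fun x hx => by simpa using hΦ x hx
  obtain ⟨ℓ, hℓ⟩ := exists_linearMap_le_of_sub_eq_univ hA hB hA0 hB0 hAB (Φ : E →ₗ[ℝ] ℝ) hΦ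
  obtain ⟨r, hr, n, hball⟩ := exists_ball_subset_sub_inter_closedBall hA hAc hB hBc hA0 hB0 hAB
  have hℓc : Continuous ℓ := ℓ.continuous_of_forall_ball_le hr (M := -(‖Φ‖ * n)) fun w hw => by
    obtain ⟨a, ⟨ha, han⟩, b, ⟨hb, -⟩, rfl⟩ := hball hw
    have h₁ := Φ.le_opNorm a
    have h₂ := mul_le_mul_of_nonneg_left (mem_closedBall_zero_iff.1 han) (norm_nonneg Φ)
    have h₃ : Φ a ≤ ℓ (a - b) := hℓ a ha b hb
    rw [Real.norm_eq_abs] at h₁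
    show -(‖Φ‖ * n) ≤ ℓ (a - b)
    linarith [neg_abs_le (Φ a)]
  refine ⟨Φ - ⟨ℓ, hℓc⟩, fun a ha => ?_, ⟨ℓ, hℓc⟩, fun b hb => ?_, sub_add_cancel _ _⟩
  · simpa using hℓ a ha 0 hB0
  · simpa using hℓ 0 hA0 b hb

theorem normalCone_inter_subset_add [CompleteSpace E] {A B : Set E} (hA : Convex ℝ A)
    (hAc : IsClosed A) (hB : Convex ℝ B) (hBc : IsClosed B) {z : E} (hzA : z ∈ A)
    (hzB : z ∈ B) (hAB : A - B = univ) :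
    normalCone (A ∩ B) z ⊆ normalCone A z + normalCone B z := by
  rw [normalCone_eq_preimage_add, normalCone_eq_preimage_add A, normalCone_eq_preimage_add B,
    preimage_inter]
  refine normalCone_inter_zero_subset_add (hA.translate_preimage_right z)
    (hAc.preimage (continuous_const_add z)) (hB.translate_preimage_right z)
    (hBc.preimage (continuous_const_add z)) (by simpa using hzA) (by simpa using hzB) ?_
  refine eq_univ_of_forall fun w => ?_
  obtain ⟨a, ha, b, hb, rfl⟩ : w ∈ A - B := hAB ▸ mem_univ w
  exact ⟨a - z, by simpa using ha, b - z, by simpa using hb, sub_sub_sub_cancel_right a b z⟩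

theorem Convex.mem_normalCone_of_eventually_le {Ω : Set E} (hΩ : Convex ℝ Ω) {z : E}
    (hz : z ∈ Ω) {Φ : E →L[ℝ] ℝ} (h : ∀ ε > 0, ∀ᶠ m in 𝓝[Ω] z, Φ (m - z) ≤ ε * ‖m - z‖) :
    Φ ∈ normalCone Ω z := by
  intro m hm
  have hlim : Tendsto (fun t : ℝ => z + t • (m - z)) (𝓝[>] 0) (𝓝[Ω] z) := by
    refine tendsto_nhdsWithin_iff.2 ⟨?_, ?_⟩
    · refine ((continuous_const.add (continuous_id.smul continuous_const)).tendsto' 0 z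
        (by simp)).mono_left nhdsWithin_le_nhds
    · filter_upwards [Ioo_mem_nhdsGT one_pos] with t ht
      exact hΩ.add_smul_sub_mem hz hm ⟨ht.1.le, ht.2.le⟩
  have hε : ∀ ε > 0, Φ (m - z) ≤ ε * ‖m - z‖ := by
    intro ε hε
    obtain ⟨t, ht, ht01⟩ := ((hlim.eventually (h ε hε)).and (Ioo_mem_nhdsGT one_pos)).exists
    simp only [add_sub_cancel_left, map_smul, norm_smul, smul_eq_mul,
      Real.norm_of_nonneg ht01.1.le] at ht
    exact le_of_mul_le_mul_left (by linarith) ht01.1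
  refine le_of_forall_pos_le_add fun δ hδ => ?_
  have hδ' : δ / (‖m - z‖ + 1) * ‖m - z‖ ≤ δ := by
    rw [div_mul_eq_mul_div, div_le_iff₀ (by positivity)]
    nlinarith [norm_nonneg (m - z)]
  linarith [hε (δ / (‖m - z‖ + 1)) (by positivity)]

theorem exists_eq_coprod_zero_of_mem_normalCone_prod_univ {α β : Type*}
    [NormedAddCommGroup α] [NormedSpace ℝ α] [NormedAddCommGroup β] [NormedSpace ℝ β]
    {s : Set α} {a : α} (ha : a ∈ s) {b : β} {Φ : α × β →L[ℝ] ℝ}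
    (hΦ : Φ ∈ normalCone (s ×ˢ univ) (a, b)) :
    ∃ Θ ∈ normalCone s a, Φ = Θ.coprod 0 := by
  refine ⟨Φ ∘L ContinuousLinearMap.inl ℝ α β,
    fun u hu => by simpa using hΦ (u, b) ⟨hu, trivial⟩, ?_⟩
  have hle : ∀ y : β, Φ (0, y) ≤ 0 := fun y => by simpa using hΦ (a, b + y) ⟨ha, trivial⟩
  have hinr : Φ ∘L ContinuousLinearMap.inr ℝ α β = 0 := by
    ext y
    have h := hle (-y)
    rw [show ((0 : α), -y) = -((0 : α), y) by simp, map_neg] at h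
    exact le_antisymm (hle y) (by simpa using h)
  calc Φ = (Φ ∘L .inl ℝ α β).coprod (Φ ∘L .inr ℝ α β) := (Φ.coprod_comp_inl_inr).symm
    _ = _ := by rw [hinr]

end NormalCone

section SetValued

variable {α β : Type*} [NormedAddCommGroup α] [NormedSpace ℝ α]
  [NormedAddCommGroup β] [NormedSpace ℝ β] {a : α} {b : β} {ψ : β →L[ℝ] ℝ}

theorem mem_coderiv_iff {H : α → Set β} {φ : α →L[ℝ] ℝ} :
    φ ∈ coderiv H a b ψ ↔ φ.coprod (-ψ) ∈ normalCone (gph H) (a, b) := by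
  refine ⟨fun h q hq => ?_, fun h u v hv => ?_⟩
  · simpa [sub_eq_add_neg] using h q.1 q.2 hq
  · simpa [sub_eq_add_neg] using h (u, v) hv

theorem coderiv_subset_fCoderiv (H : α → Set β) : coderiv H a b ψ ⊆ fCoderiv H a b ψ :=
  fun _ hφ _ _ => ⟨1, one_pos, fun u v hv _ => (hφ u v hv).trans (by positivity)⟩

theorem coderiv_subset_coderiv {G H : α → Set β} (hHG : ∀ u, H u ⊆ G u) :
    coderiv G a b ψ ⊆ coderiv H a b ψ :=
  fun _ hφ u v hv => hφ u v (hHG u hv)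

theorem fCoderiv_subset_coderiv_of_eventually_subset {G H : α → Set β} (hG : Convex ℝ (gph G))
    (hb : b ∈ G a) (hGH : ∀ᶠ u in 𝓝 a, G u ⊆ H u) : fCoderiv H a b ψ ⊆ coderiv G a b ψ := by
  intro φ hφ
  rw [mem_coderiv_iff]
  refine hG.mem_normalCone_of_eventually_le hb fun ε hε => ?_
  -- `fCoderiv` uses the sum norm, while `α × β` carries the max norm.
  obtain ⟨δ, hδ, hφδ⟩ := hφ (ε / 2) (by positivity)
  filter_upwards [nhdsWithin_le_nhds ((continuous_fst.tendsto (a, b)).eventually hGH),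
    nhdsWithin_le_nhds (Metric.ball_mem_nhds (a, b) (half_pos hδ)), self_mem_nhdsWithin]
    with ⟨u, v⟩ hGHu hdist hv
  rw [mem_ball_iff_norm, Prod.mk_sub_mk] at hdist
  rw [Prod.mk_sub_mk, ContinuousLinearMap.coprod_apply, neg_apply, ← sub_eq_add_neg]
  have hsum : ‖u - a‖ + ‖v - b‖ ≤ 2 * ‖(u - a, v - b)‖ := by
    linarith [norm_fst_le (u - a, v - b), norm_snd_le (u - a, v - b)]
  calc φ (u - a) - ψ (v - b) ≤ ε / 2 * (‖u - a‖ + ‖v - b‖) := hφδ u v (hGHu hv) (by linarith)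
    _ ≤ ε * ‖(u - a, v - b)‖ := by nlinarith

end SetValued

section Marginal

variable {P X Y : Type*} [NormedAddCommGroup P] [NormedSpace ℝ P]
  [NormedAddCommGroup X] [NormedSpace ℝ X] [NormedAddCommGroup Y] [NormedSpace ℝ Y]
  {K : Set Y} {f : P × X → Y} {C : P → Set X}

theorem convex_gph_image_add (hf : Convex ℝ (gph fun q => ({f q} : Set Y) + K))
    (hC : Convex ℝ (gph C)) : Convex ℝ (gph fun p => {y | ∃ x ∈ C p, y = f (p, x)} + K) := by
  intro q₁ hq₁ q₂ hq₂ s t hs ht hst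
  obtain ⟨_, ⟨x₁, hx₁, rfl⟩, k₁, hk₁, hy₁⟩ := hq₁
  obtain ⟨_, ⟨x₂, hx₂, rfl⟩, k₂, hk₂, hy₂⟩ := hq₂
  obtain ⟨_, rfl, k, hk, hy⟩ := hf (x := ((q₁.1, x₁), q₁.2)) (y := ((q₂.1, x₂), q₂.2))
    ⟨_, rfl, k₁, hk₁, hy₁⟩ ⟨_, rfl, k₂, hk₂, hy₂⟩ hs ht hst
  exact ⟨_, ⟨_, hC (x := (q₁.1, x₁)) (y := (q₂.1, x₂)) hx₁ hx₂ hs ht hst, rfl⟩, k, hk, hy⟩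

theorem coderiv_image_add_cone [CompleteSpace P] [CompleteSpace X] [CompleteSpace Y]
    (hK0 : (0 : Y) ∈ K) (hf : Convex ℝ (gph fun q => ({f q} : Set Y) + K))
    (hfc : IsClosed (gph fun q => ({f q} : Set Y) + K)) (hC : Convex ℝ (gph C))
    (hCc : IsClosed (gph C)) {pb : P} {xb : X} (hxb : xb ∈ C pb) (ψ : Y →L[ℝ] ℝ) :
    coderiv (fun p => {y | ∃ x ∈ C p, y = f (p, x)} + K) pb (f (pb, xb)) ψ
      = {w | ∃ pstar : P →L[ℝ] ℝ, ∃ xstar : X →L[ℝ] ℝ,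
          pstar.coprod xstar ∈ coderiv (fun q => ({f q} : Set Y) + K) (pb, xb) (f (pb, xb)) ψ ∧
          ∃ qstar ∈ coderiv C pb xb xstar, w = pstar + qstar} := by
  ext φ
  constructor
  · intro hφ
    have hxb' : (pb, xb) ∈ gph C := hxb
    have hAB : (gph fun q => ({f q} : Set Y) + K) - gph C ×ˢ univ = univ := by
      refine eq_univ_of_forall fun ⟨⟨p, x⟩, y⟩ => ?_
      exact ⟨((pb + p, xb + x), f (pb + p, xb + x)), ⟨_, rfl, 0, hK0, add_zero _⟩,
        ((pb, xb), f (pb + p, xb + x) - y), ⟨hxb', trivial⟩, by simp⟩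
    have hΦ : (φ ∘L ContinuousLinearMap.fst ℝ P X).coprod (-ψ) ∈
        normalCone ((gph fun q => ({f q} : Set Y) + K) ∩ gph C ×ˢ univ) ((pb, xb), f (pb, xb)) := by
      rintro ⟨⟨p, x⟩, y⟩ ⟨⟨_, rfl, k, hk, hy⟩, hx, -⟩
      simpa [sub_eq_add_neg] using hφ p y ⟨_, ⟨x, hx, rfl⟩, k, hk, hy⟩
    obtain ⟨Φ₁, hΦ₁, Φ₂, hΦ₂, hsum⟩ := normalCone_inter_subset_add hf hfc
      (hC.prod convex_univ) (hCc.prod isClosed_univ) ⟨_, rfl, 0, hK0, add_zero _⟩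
      ⟨hxb', trivial⟩ hAB hΦ
    obtain ⟨Θ, hΘ, rfl⟩ := exists_eq_coprod_zero_of_mem_normalCone_prod_univ hxb' hΦ₂
    refine ⟨φ - Θ ∘L .inl ℝ P X, -(Θ ∘L .inr ℝ P X), ?_, Θ ∘L .inl ℝ P X, ?_, by abel⟩
    · rw [mem_coderiv_iff]
      convert hΦ₁ using 1
      rw [eq_sub_of_add_eq hsum]
      ext <;> simp
    · rwa [mem_coderiv_iff, neg_neg, Θ.coprod_comp_inl_inr]
  · rintro ⟨pstar, xstar, hpx, qstar, hq, rfl⟩ u _ ⟨_, ⟨x, hx, rfl⟩, k, hk, rfl⟩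
    have h₁ := hpx (u, x) _ ⟨_, rfl, k, hk, rfl⟩
    have h₂ := hq u x hx
    simp only [Prod.mk_sub_mk, ContinuousLinearMap.coprod_apply] at h₁
    rw [add_apply]
    linarith

end Marginal

theorem stmt13_general
    {P X Y : Type*}
    [NormedAddCommGroup P] [NormedSpace ℝ P] [CompleteSpace P]
    [NormedAddCommGroup X] [NormedSpace ℝ X] [CompleteSpace X]
    [NormedAddCommGroup Y] [NormedSpace ℝ Y] [CompleteSpace Y]
    -- K is a pointed closed convex cone in Y
    (K : Set Y) (hKconv : Convex ℝ K)
    (hKcone : ∀ t : ℝ, 0 ≤ t → ∀ y ∈ K, t • y ∈ K)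
    (hKpointed : K ∩ (-K) = {0})
    -- f is K-convex and K-closed (its epigraph is convex and closed)
    (f : P × X → Y)
    (hfconv : Convex ℝ {q : (P × X) × Y | q.2 ∈ ({f q.1} : Set Y) + K})
    (hfcl : IsClosed {q : (P × X) × Y | q.2 ∈ ({f q.1} : Set Y) + K})
    -- C is a closed convex set-valued map
    (C : P → Set X) (hCconv : Convex ℝ (gph C)) (hCcl : IsClosed (gph C))
    -- F(p) = {f(p,x) : x ∈ C(p)},  𝓕(p) = Min_K F(p)
    (F : P → Set Y) (hF : ∀ p, F p = {y : Y | ∃ x ∈ C p, y = f (p, x)})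
    (Fmin : P → Set Y)
    (hFmin : ∀ p, Fmin p = {a ∈ F p | (F p - {a}) ∩ ((-K) \ {0}) = ∅})
    -- (pb, xb) ∈ gph S, yb = f(pb, xb)
    (pb : P) (xb : X) (hxbC : xb ∈ C pb)
    (yb : Y) (hyb : yb = f (pb, xb))
    -- (iii) F is K-dominated by 𝓕 near pb
    (hdom : ∃ U ∈ nhds pb, ∀ p ∈ U, F p ⊆ Fmin p + K)
    (ψ : Y →L[ℝ] ℝ) :
    fCoderiv (fun p => Fmin p + K) pb yb ψ
      = {w : P →L[ℝ] ℝ | ∃ pstar : P →L[ℝ] ℝ, ∃ xstar : X →L[ℝ] ℝ,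
          pstar.coprod xstar
            ∈ coderiv (fun q : P × X => ({f q} : Set Y) + K) (pb, xb) (f (pb, xb)) ψ ∧
          ∃ qstar ∈ coderiv C pb xb xstar, w = pstar + qstar} := by
  have hK0 : (0 : Y) ∈ K := (hKpointed.symm ▸ mem_singleton 0 : (0 : Y) ∈ K ∩ -K).1
  have hKK : K + K ⊆ K := by
    rintro _ ⟨k₁, hk₁, k₂, hk₂, rfl⟩
    have := hKcone 2 zero_le_two _ (hKconv hk₁ hk₂ (by norm_num : (0 : ℝ) ≤ 1 / 2)
      (by norm_num : (0 : ℝ) ≤ 1 / 2) (by norm_num))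
    rwa [smul_add, smul_smul, smul_smul, mul_one_div_cancel two_ne_zero, one_smul, one_smul]
      at this
  have hFmin_subset : ∀ p, Fmin p ⊆ F p := fun p y hy => by rw [hFmin] at hy; exact hy.1
  have hF_subset : ∀ᶠ p in 𝓝 pb, F p + K ⊆ Fmin p + K := by
    obtain ⟨U, hU, hUdom⟩ := hdom
    filter_upwards [hU] with p hp
    calc F p + K ⊆ Fmin p + K + K := add_subset_add_right (hUdom p hp)
      _ ⊆ Fmin p + K := by rw [add_assoc]; exact add_subset_add_left hKK
  obtain rfl : F = fun p => {y | ∃ x ∈ C p, y = f (p, x)} := funext hF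
  subst hyb
  rw [← coderiv_image_add_cone hK0 hfconv hfcl hCconv hCcl hxbC ψ]
  exact Subset.antisymm
    (fCoderiv_subset_coderiv_of_eventually_subset (convex_gph_image_add hfconv hCconv)
      ⟨_, ⟨xb, hxbC, rfl⟩, 0, hK0, add_zero _⟩ hF_subset)
    ((coderiv_subset_coderiv fun p => add_subset_add_right (hFmin_subset p)).trans
      (coderiv_subset_fCoderiv _))

/-- under the assumptions of STATEMENT 9 together with the domination
property of `F` by `𝓕` near `pb`, for every `y* ∈ Y*`:
`D̂*(𝓕 + K)(pb, yb)(y*) = ⋃_{(p*,x*) ∈ D*(f + K)(pb, xb)(y*)} {p* + D*C(pb, xb)(x*)}`. -/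
theorem stmt13
    {P X Y : Type*}
    [NormedAddCommGroup P] [NormedSpace ℝ P] [CompleteSpace P]
    [NormedAddCommGroup X] [NormedSpace ℝ X] [CompleteSpace X]
    [NormedAddCommGroup Y] [NormedSpace ℝ Y] [CompleteSpace Y]
    -- K is a pointed closed convex cone in Y
    (K : Set Y) (hKconv : Convex ℝ K) (hKclosed : IsClosed K)
    (hKcone : ∀ t : ℝ, 0 ≤ t → ∀ y ∈ K, t • y ∈ K)
    (hKpointed : K ∩ (-K) = {0})
    -- f is K-convex and K-closed (its epigraph is convex and closed)
    (f : P × X → Y)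
    (hfconv : Convex ℝ {q : (P × X) × Y | q.2 ∈ ({f q.1} : Set Y) + K})
    (hfcl : IsClosed {q : (P × X) × Y | q.2 ∈ ({f q.1} : Set Y) + K})
    -- C is a closed convex set-valued map
    (C : P → Set X) (hCconv : Convex ℝ (gph C)) (hCcl : IsClosed (gph C))
    -- F(p) = {f(p,x) : x ∈ C(p)},  𝓕(p) = Min_K F(p)
    (F : P → Set Y) (hF : ∀ p, F p = {y : Y | ∃ x ∈ C p, y = f (p, x)})
    (Fmin : P → Set Y)
    (hFmin : ∀ p, Fmin p = {a ∈ F p | (F p - {a}) ∩ ((-K) \ {0}) = ∅})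
    -- (pb, xb) ∈ gph S, yb = f(pb, xb)
    (pb : P) (xb : X) (hxbC : xb ∈ C pb) (hsol : f (pb, xb) ∈ Fmin pb)
    (yb : Y) (hyb : yb = f (pb, xb))
    -- (i) ℝ⁺(rge H − dom f) is a closed linear subspace of P × X, where
    --     H(p) = {p} × C(p), so rge H = gph C and dom f = P × X
    (hqual1 : ∃ S : Submodule ℝ (P × X), IsClosed (S : Set (P × X)) ∧
      {w : P × X | ∃ t : ℝ, 0 ≤ t ∧
        ∃ u ∈ ⋃ p : P, ({p} : Set P) ×ˢ C p, ∃ v : P × X, w = t • (u - v)} = S)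
    -- (ii) ℝ⁺(P − dom C) is a closed linear subspace of P
    (hqual2 : ∃ S : Submodule ℝ P, IsClosed (S : Set P) ∧
      {w : P | ∃ t : ℝ, 0 ≤ t ∧ ∃ u : P, ∃ v ∈ dom C, w = t • (u - v)} = S)
    -- (iii) F is K-dominated by 𝓕 near pb
    (hdom : ∃ U ∈ nhds pb, ∀ p ∈ U, F p ⊆ Fmin p + K)
    (ψ : Y →L[ℝ] ℝ) :
    fCoderiv (fun p => Fmin p + K) pb yb ψ
      = {w : P →L[ℝ] ℝ | ∃ pstar : P →L[ℝ] ℝ, ∃ xstar : X →L[ℝ] ℝ,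
          pstar.coprod xstar
            ∈ coderiv (fun q : P × X => ({f q} : Set Y) + K) (pb, xb) (f (pb, xb)) ψ ∧
          ∃ qstar ∈ coderiv C pb xb xstar, w = pstar + qstar} :=
  stmt13_general K hKconv hKcone hKpointed f hfconv hfcl C hCconv hCcl F hF Fmin hFmin pb xb hxbC yb
    hyb hdom ψ
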